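/- Let k ≥ 1 be an integer and, for each integer j ≥ 1, let A_j = (2/π) ∫_0^π (cos η)^k cos(jη) dη denote the j-th cosine Fourier coefficient of the function η ↦ (cos η)^k on [0,π]. Then ∑_{j=1}^{k} j · A_j² = (k / 4^{k-1}) · C(k-1, ⌊(k-1)/2⌋)². -/

import Mathlib

/-!
Expanding `(2 cos η)^k = (e^{iη} + e^{-iη})^k` binomially and taking real parts gives
`cos^k η = 2^{-k} ∑_m C(k,m) cos((2m-k)η)`, so orthogonality of the cosines on `[0,π]` yields
`A_{k-2m} = 2^{1-k} C(k,m)` for `2m < k` and `A_j = 0` when `k - j` is odd. With `k = n + 1`,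
Pascal's rule and `(m+1) C(n+1,m+1) = (n+1) C(n,m)` give
`(n+1-2m) C(n+1,m)² = (n+1) (C(n,m)² - C(n,m-1)²)`, so the sum telescopes.
-/

open Finset Real

theorem two_mul_cos_pow (k : ℕ) (x : ℝ) :
    (2 * cos x) ^ k = ∑ m ∈ range (k + 1), (k.choose m : ℝ) * cos (((2 * m - k : ℤ) : ℝ) * x) := by
  have hexp : (((2 * cos x) ^ k : ℝ) : ℂ) = ∑ m ∈ range (k + 1),
      (k.choose m : ℂ) * Complex.exp ((((2 * m - k : ℤ) : ℝ) * x : ℝ) * Complex.I) := by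
    push_cast
    rw [Complex.two_cos, add_pow]
    refine sum_congr rfl fun m hm => ?_
    have hmk : m ≤ k := Nat.lt_succ_iff.mp (mem_range.mp hm)
    rw [← Complex.exp_nat_mul, ← Complex.exp_nat_mul, ← Complex.exp_add, mul_comm]
    congr 2
    push_cast [hmk]
    ring
  simpa only [Complex.ofReal_re, Complex.re_sum, Complex.re_ofReal_mul,
    Complex.exp_ofReal_mul_I_re, ← Complex.ofReal_natCast] using congrArg Complex.re hexp

theorem integral_cos_int_mul (n : ℤ) :
    ∫ x in (0 : ℝ)..π, cos (n * x) = if n = 0 then π else 0 := by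
  split_ifs with hn
  · simp [hn]
  · rw [intervalIntegral.integral_comp_mul_left cos (Int.cast_ne_zero.mpr hn)]
    simp [sin_int_mul_pi]

theorem integral_cos_int_mul_mul_cos_nat_mul (n : ℤ) {j : ℕ} (hj : j ≠ 0) :
    ∫ x in (0 : ℝ)..π, cos (n * x) * cos (j * x) = if n.natAbs = j then π / 2 else 0 := by
  have hprod (x : ℝ) : cos (n * x) * cos (j * x)
      = (cos (((n - j : ℤ) : ℝ) * x) + cos (((n + j : ℤ) : ℝ) * x)) / 2 := by
    push_cast
    rw [sub_mul, add_mul, ← two_mul_cos_mul_cos]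
    ring
  have hint (p : ℤ) : IntervalIntegrable (fun x : ℝ => cos (p * x)) MeasureTheory.volume 0 π :=
    (by fun_prop : Continuous fun x : ℝ => cos (p * x)).intervalIntegrable 0 π
  simp_rw [hprod]
  rw [intervalIntegral.integral_div, intervalIntegral.integral_add (hint _) (hint _),
    integral_cos_int_mul, integral_cos_int_mul]
  split_ifs <;> first | omega | ring

theorem integral_cos_pow_mul_cos_nat_mul (k : ℕ) {j : ℕ} (hj : j ≠ 0) :
    ∫ x in (0 : ℝ)..π, cos x ^ k * cos (j * x) = π / 2 ^ (k + 1) *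
      ∑ m ∈ range (k + 1) with (2 * (m : ℕ) - k : ℤ).natAbs = j, (k.choose m : ℝ) := by
  have hpow (x : ℝ) : cos x ^ k * cos (j * x) = (2 ^ k)⁻¹ * ∑ m ∈ range (k + 1),
      (k.choose m : ℝ) * (cos (((2 * m - k : ℤ) : ℝ) * x) * cos (j * x)) := by
    simp_rw [← mul_assoc, ← sum_mul, ← two_mul_cos_pow, mul_pow]
    field_simp
  simp_rw [hpow]
  rw [intervalIntegral.integral_const_mul, intervalIntegral.integral_finsetSum fun m _ =>
    (by fun_prop : Continuous _).intervalIntegrable 0 π]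
  simp_rw [intervalIntegral.integral_const_mul, integral_cos_int_mul_mul_cos_nat_mul _ hj,
    mul_sum, sum_filter]
  refine sum_congr rfl fun m _ => ?_
  split_ifs <;> ring

theorem sum_Icc_eq_sum_range_sub_two_mul {M : Type*} [AddCommMonoid M] (k : ℕ) (f : ℕ → M)
    (hf : ∀ j ∈ Icc 1 k, Odd (k + j) → f j = 0) :
    ∑ j ∈ Icc 1 k, f j = ∑ m ∈ range ((k + 1) / 2), f (k - 2 * m) := by
  rw [← sum_image (g := fun m => k - 2 * m) fun a ha b hb hab => by
    simp only [coe_range, Set.mem_Iio] at ha hb hab; omega]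
  refine (sum_subset (fun j hj => ?_) fun j hj hj' => hf j hj ?_).symm
  · simp only [mem_image, mem_range] at hj
    obtain ⟨m, hm, rfl⟩ := hj
    simp only [mem_Icc]
    omega
  · simp only [mem_Icc, mem_image, mem_range, not_exists, not_and] at hj hj'
    rw [Nat.odd_iff]
    by_contra h
    exact hj' ((k - j) / 2) (by omega) (by omega)

theorem sum_range_sub_two_mul_mul_choose_sq (n M : ℕ) :
    ∑ m ∈ range (M + 1), ((n + 1 : ℝ) - 2 * m) * ((n + 1).choose m : ℝ) ^ 2
      = (n + 1) * (n.choose M : ℝ) ^ 2 := by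
  induction M with
  | zero => simp
  | succ M ih =>
    rw [sum_range_succ, ih]
    have hpascal : ((n + 1).choose (M + 1) : ℝ) = n.choose M + n.choose (M + 1) := by
      exact_mod_cast Nat.choose_succ_succ' n M
    have habsorb : (n + 1 : ℝ) * n.choose M = (n + 1).choose (M + 1) * (M + 1) := by
      exact_mod_cast Nat.add_one_mul_choose_eq n M
    push_cast
    linear_combination (2 * ((n + 1).choose (M + 1) : ℝ)) * habsorb
      + (n + 1 : ℝ) * ((n + 1).choose (M + 1) - n.choose M + n.choose (M + 1)) * hpascal

theorem filter_natAbs_two_mul_sub_eq_of_add_eq {k j m : ℕ} (h : j + 2 * m = k) :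
    {i ∈ range (k + 1) | (2 * (i : ℕ) - k : ℤ).natAbs = j} = {m, k - m} := by
  ext i
  simp only [mem_filter, mem_range, mem_insert, mem_singleton, Int.natAbs_eq_iff]
  omega

theorem filter_natAbs_two_mul_sub_eq_of_odd {k j : ℕ} (h : Odd (k + j)) :
    {i ∈ range (k + 1) | (2 * (i : ℕ) - k : ℤ).natAbs = j} = ∅ := by
  rw [Nat.odd_iff] at h
  ext i
  simp only [mem_filter, mem_range, Int.natAbs_eq_iff, notMem_empty, iff_false]
  omega

theorem integral_cos_pow_mul_cos_sub_two_mul {k m : ℕ} (h : 2 * m < k) :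
    ∫ x in (0 : ℝ)..π, cos x ^ k * cos ((k - 2 * m : ℕ) * x) = π * k.choose m / 2 ^ k := by
  rw [integral_cos_pow_mul_cos_nat_mul k (by omega),
    filter_natAbs_two_mul_sub_eq_of_add_eq (m := m) (by omega),
    sum_pair (by omega), Nat.choose_symm (by omega), pow_succ]
  field_simp
  ring

theorem integral_cos_pow_mul_cos_of_odd {k j : ℕ} (hj : j ≠ 0) (h : Odd (k + j)) :
    ∫ x in (0 : ℝ)..π, cos x ^ k * cos (j * x) = 0 := by
  rw [integral_cos_pow_mul_cos_nat_mul k hj, filter_natAbs_two_mul_sub_eq_of_odd h, sum_empty,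
    mul_zero]

theorem sum_fourier_coeff_cos_pow_general (k : ℕ) (A : ℕ → ℝ)
    (hA : ∀ j : ℕ,
      A j = (2 / Real.pi) * ∫ η in (0:ℝ)..Real.pi, (Real.cos η) ^ k * Real.cos (j * η)) :
    ∑ j ∈ Finset.Icc 1 k, (j : ℝ) * (A j) ^ 2
      = ((k : ℝ) / 4 ^ (k - 1)) * (Nat.choose (k - 1) ((k - 1) / 2) : ℝ) ^ 2 := by
  cases k with
  | zero => simp
  | succ n =>
    have hA_odd (j : ℕ) (hj : j ∈ Icc 1 (n + 1)) (hodd : Odd (n + 1 + j)) :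
        (j : ℝ) * A j ^ 2 = 0 := by
      rw [hA, integral_cos_pow_mul_cos_of_odd (Nat.one_le_iff_ne_zero.mp (mem_Icc.mp hj).1) hodd]
      simp
    rw [sum_Icc_eq_sum_range_sub_two_mul _ _ hA_odd, show (n + 1 + 1) / 2 = n / 2 + 1 by omega,
      Nat.add_sub_cancel, Nat.cast_succ, div_mul_eq_mul_div,
      ← sum_range_sub_two_mul_mul_choose_sq n (n / 2), sum_div]
    refine sum_congr rfl fun m hm => ?_
    have hm : 2 * m < n + 1 := by rw [mem_range] at hm; omega
    rw [hA, integral_cos_pow_mul_cos_sub_two_mul hm, Nat.cast_sub hm.le,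
      show (4 : ℝ) ^ n = 2 ^ n * 2 ^ n by rw [← mul_pow]; norm_num]
    field_simp
    push_cast
    ring

/-- Let `k ≥ 1` and let `A j = (2/π) ∫_0^π (cos η)^k cos(jη) dη` be the `j`-th cosine
Fourier coefficient of `η ↦ (cos η)^k` on `[0,π]`. Then
`∑_{j=1}^{k} j·A_j² = (k / 4^{k-1}) · C(k-1, ⌊(k-1)/2⌋)²`. -/
theorem sum_fourier_coeff_cos_pow (k : ℕ) (hk : 1 ≤ k) (A : ℕ → ℝ)
    (hA : ∀ j : ℕ,
      A j = (2 / Real.pi) * ∫ η in (0:ℝ)..Real.pi, (Real.cos η) ^ k * Real.cos (j * η)) :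
    ∑ j ∈ Finset.Icc 1 k, (j : ℝ) * (A j) ^ 2
      = ((k : ℝ) / 4 ^ (k - 1)) * (Nat.choose (k - 1) ((k - 1) / 2) : ℝ) ^ 2 :=
  sum_fourier_coeff_cos_pow_general k A hA
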